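/- Let δ be a positive integer and let t₁ = t[i₁..j₁] and t₂ = t[i₂..j₂] be distinct cubic runs of a string t with i₁ ≤ i₂, whose minimal periods p₁ and p₂ both lie in the interval [2δ, 3δ]. Let e₁ = (j₁ − i₁ + 1)/p₁ be the exponent of t₁. Then i₂ − i₁ ≥ (e₁ − 5/2)·p₁. -/
import Mathlib


/-- `p` is a period of the substring `t[i..j]` of the 1-indexed string `t`:
`1 ≤ p ≤ |t[i..j]| = j - i + 1`, and `t[k] = t[k + p]` whenever both positions
lie in `[i..j]` (vacuously, the length is always a period). -/
def IsPeriodOf {α : Type*} (t : ℕ → α) (i j p : ℕ) : Prop :=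
  1 ≤ p ∧ p ≤ j + 1 - i ∧ ∀ k, i ≤ k → k + p ≤ j → t (k + p) = t k

/-- The minimal period of the substring `t[i..j]`. -/
noncomputable def minPeriod {α : Type*} (t : ℕ → α) (i j : ℕ) : ℕ :=
  sInf {p | IsPeriodOf t i j p}

/-- `t[i..j]` is a run of the string `t[1..n]`: its exponent is at least `2`
(i.e. `j - i + 1 ≥ 2 · minPeriod`), and the extensions `t[i-1..j]` (if `i > 1`)
and `t[i..j+1]` (if `j < n`) have strictly larger minimal periods. -/
def IsRun {α : Type*} (t : ℕ → α) (n i j : ℕ) : Prop :=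
  1 ≤ i ∧ i ≤ j ∧ j ≤ n ∧
  2 * minPeriod t i j ≤ j + 1 - i ∧
  (1 < i → minPeriod t i j < minPeriod t (i - 1) j) ∧
  (j < n → minPeriod t i j < minPeriod t i (j + 1))

/-- A cubic run is a run of exponent at least `3`. -/
def IsCubicRun {α : Type*} (t : ℕ → α) (n i j : ℕ) : Prop :=
  IsRun t n i j ∧ 3 * minPeriod t i j ≤ j + 1 - i


def HasPer {α : Type*} (t : ℕ → α) (a b p : ℕ) : Prop :=
  ∀ k, a ≤ k → k + p ≤ b → t (k + p) = t k

lemma hasPer_mono {α : Type*} {t : ℕ → α} {a b a' b' p : ℕ}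
    (h : HasPer t a b p) (ha : a ≤ a') (hb : b' ≤ b) : HasPer t a' b' p :=
  fun k hk hk' => h k (ha.trans hk) (hk'.trans hb)

lemma hasPer_sub {α : Type*} {t : ℕ → α} {a b p q : ℕ} (hq : 0 < q) (hqp : q < p)
    (hp : HasPer t a b p) (hq' : HasPer t a b q) (hlen : a + p + q ≤ b + 1) :
    HasPer t a b (p - q) := by
  intro k hk hk'
  rcases le_or_gt (k + p) b with hb | hb
  · have h1 : t (k + (p - q)) = t k := by
      have h2 := hq' (k + (p - q)) (by omega) (by omega)
      rw [show k + (p - q) + q = k + p by omega] at h2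
      rw [← h2]; exact hp k hk hb
    exact h1
  · have h1 : t k = t (k - q) := by
      have := hq' (k - q) (by omega) (by omega)
      rwa [show k - q + q = k by omega] at this
    have h2 : t (k + (p - q)) = t (k - q) := by
      have := hp (k - q) (by omega) (by omega)
      rwa [show k - q + p = k + (p - q) by omega] at this
    rw [h2, h1]

lemma fine_wilf_aux {α : Type*} {t : ℕ → α} :
    ∀ N p q a b, p + q ≤ N → 0 < p → 0 < q →
      HasPer t a b p → HasPer t a b q → a + p + q ≤ b + 1 →
      HasPer t a b (Nat.gcd p q) := by
  intro N
  induction N with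
  | zero => intro p q a b h hp hq; omega
  | succ N ih =>
    intro p q a b hN hp hq hP hQ hlen
    rcases lt_trichotomy p q with h | h | h
    · have hsub : HasPer t a b (q - p) := hasPer_sub hp h hQ hP (by omega)
      have hrec := ih p (q - p) a b (by omega) hp (by omega) hP hsub (by omega)
      have egcd : Nat.gcd p (q - p) = Nat.gcd p q := by
        conv_rhs => rw [show q = (q - p) + p by omega]
        rw [Nat.gcd_add_self_right]
      rwa [egcd] at hrec
    · subst h
      simpa [Nat.gcd_self] using hP
    · have hsub : HasPer t a b (p - q) := hasPer_sub hq h hP hQ hlen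
      have hrec := ih (p - q) q a b (by omega) (by omega) hq hsub hQ (by omega)
      have egcd : Nat.gcd (p - q) q = Nat.gcd p q := by
        conv_rhs => rw [show p = (p - q) + q by omega]
        rw [Nat.gcd_comm ((p - q) + q) q, Nat.gcd_add_self_right, Nat.gcd_comm]
      rwa [egcd] at hrec

lemma fine_wilf {α : Type*} {t : ℕ → α} {p q a b : ℕ} (hp : 0 < p) (hq : 0 < q)
    (hP : HasPer t a b p) (hQ : HasPer t a b q) (hlen : a + p + q ≤ b + 1) :
    HasPer t a b (Nat.gcd p q) :=
  fine_wilf_aux (p + q) p q a b le_rfl hp hq hP hQ hlen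

lemma hasPer_propagate {α : Type*} {t : ℕ → α} {a b p g : ℕ}
    (hg : 0 < g) (hp0 : 0 < p)
    (hP : HasPer t a b p) (hpre : HasPer t a (a + p + g - 1) g)
    (hlen : a + p + g ≤ b + 1) :
    HasPer t a b g := by
  intro k
  induction k using Nat.strong_induction_on with
  | _ k ih =>
    intro hk hk'
    rcases lt_or_ge k (a + p) with h | h
    · exact hpre k hk (by omega)
    · have h1 : t (k + g) = t (k - p + g) := by
        have := hP (k - p + g) (by omega) (by omega)
        rwa [show k - p + g + p = k + g by omega] at this
      have h2 := ih (k - p) (by omega) (by omega) (by omega)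
      have h3 : t k = t (k - p) := by
        have := hP (k - p) (by omega) (by omega)
        rwa [show k - p + p = k by omega] at this
      rw [h1, h2, ← h3]

lemma isPeriodOf_len {α : Type*} (t : ℕ → α) {i j : ℕ} (h : i ≤ j) :
    IsPeriodOf t i j (j + 1 - i) :=
  ⟨by omega, le_refl _, fun k hk hk' => absurd hk' (by omega)⟩

lemma minPeriod_isPeriodOf {α : Type*} (t : ℕ → α) {i j : ℕ} (h : i ≤ j) :
    IsPeriodOf t i j (minPeriod t i j) := by
  have : {p | IsPeriodOf t i j p}.Nonempty := ⟨j + 1 - i, isPeriodOf_len t h⟩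
  exact Nat.sInf_mem this

lemma minPeriod_le' {α : Type*} {t : ℕ → α} {i j p : ℕ} (h : IsPeriodOf t i j p) :
    minPeriod t i j ≤ p := Nat.sInf_le h

lemma minPeriod_le {α : Type*} {t : ℕ → α} {i j p : ℕ} (h : IsPeriodOf t i j p) :
    minPeriod t i j ≤ p := Nat.sInf_le h

lemma two_mul_le_of_dvd_lt {g p : ℕ} (hg : 0 < g) (hd : g ∣ p) (h : g < p) :
    2 * g ≤ p := by
  obtain ⟨k, rfl⟩ := hd
  rcases Nat.lt_or_ge k 2 with hk | hk
  · interval_cases k <;> omega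
  · have : g * 2 ≤ g * k := Nat.mul_le_mul_left _ hk
    omega

lemma eq_of_dvd_bounds {p q d : ℕ} (hp : 0 < p) (hd : p ∣ q) (hq : 0 < q)
    (hdl : 0 < d) (hpl : 2 * d ≤ p) (hqu : q ≤ 3 * d) : q = p := by
  obtain ⟨k, rfl⟩ := hd
  rcases Nat.lt_or_ge k 2 with hk | hk
  · interval_cases k <;> omega
  · have : p * 2 ≤ p * k := Nat.mul_le_mul_left _ hk
    omega

/-- If `t[i₁..j₁]` and `t[i₂..j₂]` are distinct cubic runs with `i₁ ≤ i₂` whose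
minimal periods `p₁, p₂` both lie in `[2δ, 3δ]`, and `e₁` is the exponent of
`t[i₁..j₁]`, then `i₂ - i₁ ≥ (e₁ - 5/2)·p₁`. -/
theorem cubic_runs_start_gap_exponent {α : Type*} (t : ℕ → α)
    (n δ i₁ j₁ i₂ j₂ : ℕ) (hδ : 0 < δ)
    (h₁ : IsCubicRun t n i₁ j₁) (h₂ : IsCubicRun t n i₂ j₂)
    (hne : (i₁, j₁) ≠ (i₂, j₂)) (hle : i₁ ≤ i₂)
    (hp₁l : 2 * δ ≤ minPeriod t i₁ j₁) (hp₁u : minPeriod t i₁ j₁ ≤ 3 * δ)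
    (hp₂l : 2 * δ ≤ minPeriod t i₂ j₂) (hp₂u : minPeriod t i₂ j₂ ≤ 3 * δ) :
    (((j₁ + 1 - i₁ : ℕ) : ℝ) / (minPeriod t i₁ j₁ : ℝ) - 5 / 2)
        * (minPeriod t i₁ j₁ : ℝ)
      ≤ (i₂ : ℝ) - (i₁ : ℝ) := by
  obtain ⟨⟨hi₁, hij₁, hjn₁, _, hLx₁, hRx₁⟩, hc₁⟩ := h₁
  obtain ⟨⟨hi₂, hij₂, hjn₂, _, hLx₂, hRx₂⟩, hc₂⟩ := h₂
  obtain ⟨hp₁pos, hp₁len, P1⟩ := minPeriod_isPeriodOf t hij₁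
  obtain ⟨hp₂pos, hp₂len, P2⟩ := minPeriod_isPeriodOf t hij₂
  set p₁ := minPeriod t i₁ j₁ with hp₁def
  set p₂ := minPeriod t i₂ j₂ with hp₂def
  have key : 2 * (j₁ + 1 - i₁) ≤ 2 * (i₂ - i₁) + 5 * p₁ := by
    by_contra hK
    have hH : 2 * i₂ + 5 * p₁ < 2 * (j₁ + 1) := by omega
    set m := min j₁ j₂ with hm
    have gP1 : HasPer t i₂ m p₁ := fun k hk hk' => P1 k (hle.trans hk) (by omega)
    have gP2 : HasPer t i₂ m p₂ := fun k hk hk' => P2 k hk (by omega)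
    have hlenFW : i₂ + p₁ + p₂ ≤ m + 1 := by omega
    set g := Nat.gcd p₁ p₂ with hg
    have hgper : HasPer t i₂ m g := fine_wilf hp₁pos hp₂pos gP1 gP2 hlenFW
    have hgpos : 0 < g := Nat.gcd_pos_of_pos_left _ hp₁pos
    have hgd1 : g ∣ p₁ := Nat.gcd_dvd_left _ _
    have hgd2 : g ∣ p₂ := Nat.gcd_dvd_right _ _
    have hgle1 : g ≤ p₁ := Nat.le_of_dvd hp₁pos hgd1
    have hgle2 : g ≤ p₂ := Nat.le_of_dvd hp₂pos hgd2
    by_cases hcase : g = p₁ ∨ g = p₂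
    · have hpp : p₂ = p₁ := by
        rcases hcase with h | h
        · exact eq_of_dvd_bounds hp₁pos (h ▸ hgd2) hp₂pos hδ hp₁l hp₂u
        · exact (eq_of_dvd_bounds hp₂pos (h ▸ hgd1) hp₁pos hδ hp₂l hp₁u).symm
      rcases eq_or_lt_of_le hle with hii | hii
      · have hjj : j₁ ≠ j₂ := fun h => hne (by rw [hii, h])
        rcases Nat.lt_or_ge j₁ j₂ with hj | hj
        · have h5 := hRx₁ (lt_of_lt_of_le hj hjn₂)
          have h6 : minPeriod t i₁ (j₁ + 1) ≤ p₁ :=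
            minPeriod_le ⟨hp₁pos, by omega, fun k hk hk' => by
              have h7 := P2 k (by omega) (by omega)
              rwa [hpp] at h7⟩
          omega
        · have hj' : j₂ < j₁ := by omega
          have h5 := hRx₂ (lt_of_lt_of_le hj' hjn₁)
          have h6 : minPeriod t i₂ (j₂ + 1) ≤ p₂ :=
            minPeriod_le ⟨hp₂pos, by omega, fun k hk hk' => by
              have h7 := P1 k (by omega) (by omega)
              rwa [hpp]⟩
          omega
      · have h5 := hLx₂ (by omega)
        have h6 : minPeriod t (i₂ - 1) j₂ ≤ p₂ :=
          minPeriod_le ⟨hp₂pos, by omega, fun k hk hk' => by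
            rcases Nat.lt_or_ge k i₂ with hki | hki
            · have h7 := P1 k (by omega) (by omega)
              rwa [hpp]
            · exact P2 k hki hk'⟩
        omega
    · push_neg at hcase
      have hg1 : g < p₁ := lt_of_le_of_ne hgle1 hcase.1
      have hg2 : g < p₂ := lt_of_le_of_ne hgle2 hcase.2
      have h2g : 2 * g ≤ p₁ := two_mul_le_of_dvd_lt hgpos hgd1 hg1
      have hlen2 : i₂ + p₂ + g ≤ m + 1 := by omega
      have hgfull : HasPer t i₂ j₂ g :=
        hasPer_propagate hgpos hp₂pos (fun k hk hk' => P2 k hk hk')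
          (hasPer_mono hgper le_rfl (by omega)) (by omega)
      have h6 : minPeriod t i₂ j₂ ≤ g := minPeriod_le ⟨hgpos, by omega, hgfull⟩
      omega
  have hp0R : (0 : ℝ) < (p₁ : ℝ) := by exact_mod_cast hp₁pos
  have hcast : (2 : ℝ) * ((j₁ + 1 - i₁ : ℕ) : ℝ)
      ≤ 2 * ((i₂ : ℝ) - (i₁ : ℝ)) + 5 * (p₁ : ℝ) := by
    calc (2 : ℝ) * ((j₁ + 1 - i₁ : ℕ) : ℝ) = ((2 * (j₁ + 1 - i₁) : ℕ) : ℝ) := by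
          push_cast; ring
      _ ≤ ((2 * (i₂ - i₁) + 5 * p₁ : ℕ) : ℝ) := by exact_mod_cast key
      _ = 2 * ((i₂ : ℝ) - (i₁ : ℝ)) + 5 * (p₁ : ℝ) := by
          push_cast [Nat.cast_sub hle]; ring
  rw [sub_mul, div_mul_cancel₀ _ (ne_of_gt hp0R)]
  linarith
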